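/- (One-step bijection) Let F satisfy the hypotheses of the existence theorem. Then for each t there is a bijection, up to a.s.-equality and ∼_{M_{t+1}}-equivalence, between pairs (Y_t, Z_t) ∈ L^∞(F_t) × L^∞(F_t) and terminal values Y_{t+1} ∈ L^∞(F_{t+1}), given by Y_{t+1} = Y_t - F(ω,t,Y_t,Z_t) + Z_t M_{t+1}. -/

import Mathlib

/-!
Every `𝓕 t`-measurable function factors through the finitely-valued history
`V = (X 0, …, X t)`. Since `X (t + 1)` is a unit vector, an `𝓕 (t + 1)`-measurable terminal value
can be written `Ynext = Z *ᵥ X (t + 1) = Z *ᵥ E[X (t + 1) | 𝓕 t] + Z *ᵥ M (t + 1)` with `Z`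
factoring through `V`, and `Y` is obtained by inverting `y ↦ y - F ω t y (Z ω)` fibrewise over `V`.
Conversely, if `Ynext = A + Z *ᵥ M (t + 1)` with `A`, `Z` bounded and `𝓕 t`-measurable, then the
pull-out property gives `A = E[Ynext | 𝓕 t]`; this determines `Y - F(Y, Z)` and `Z *ᵥ M (t + 1)`,
and the `∼_M`-invariance of `F` together with the injectivity of `y ↦ y - F(y, Z)` determines `Y`.
-/

open MeasureTheory Set Function Matrix

section FactorsThrough

variable {Ω γ β : Type*} {V : Ω → γ}

theorem Set.finite_range_pi {ι : Type*} {α : ι → Type*} [Finite ι] {f : ∀ i, Ω → α i}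
    (hf : ∀ i, (range (f i)).Finite) : (range fun ω i => f i ω).Finite :=
  (Set.Finite.pi' hf).subset (range_subset_iff.2 fun ω _ => mem_range_self ω)

theorem factorsThrough_init_last (X : ℕ → Ω → β) (n : ℕ) :
    (fun ω (s : Fin (n + 1)) => X s ω).FactorsThrough fun ω => (fun s : Fin n => X s ω, X n ω) := by
  intro ω₁ ω₂ h
  funext s
  induction s using Fin.lastCases with
  | last => exact (Prod.ext_iff.1 h).2
  | cast s => exact congrFun (Prod.ext_iff.1 h).1 s

theorem Function.FactorsThrough.finite_range {g : Ω → β} (hg : g.FactorsThrough V)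
    (hV : (range V).Finite) : (range g).Finite := by
  have := hV.to_subtype
  refine (Set.finite_range fun v : range V => g v.2.choose).subset ?_
  rintro _ ⟨ω, rfl⟩
  have h : ∃ ω', V ω' = V ω := ⟨ω, rfl⟩
  exact ⟨⟨V ω, h⟩, hg h.choose_spec⟩

theorem Function.FactorsThrough.measurableSet_comap_preimage [mγ : MeasurableSpace γ]
    [MeasurableSingletonClass γ] {g : Ω → β} (hg : g.FactorsThrough V) (hV : (range V).Finite)
    (s : Set β) : MeasurableSet[mγ.comap V] (g ⁻¹' s) := by
  refine ⟨V '' (g ⁻¹' s), (hV.subset (image_subset_range _ _)).measurableSet, ?_⟩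
  ext ω
  exact ⟨fun ⟨ω', hω', hVω⟩ => mem_preimage.2 (hg hVω ▸ hω'), fun h => ⟨ω, h, rfl⟩⟩

theorem Function.FactorsThrough.stronglyMeasurable_comap [mγ : MeasurableSpace γ]
    [MeasurableSingletonClass γ] [TopologicalSpace β] {g : Ω → β} (hg : g.FactorsThrough V)
    (hV : (range V).Finite) : StronglyMeasurable[mγ.comap V] g :=
  letI := mγ.comap V
  (SimpleFunc.mk g (fun b => hg.measurableSet_comap_preimage hV {b})
    (hg.finite_range hV)).stronglyMeasurable

theorem MeasureTheory.StronglyMeasurable.exists_norm_le_of_comap [mγ : MeasurableSpace γ]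
    {E : Type*} [NormedAddCommGroup E] {g : Ω → E} (hg : StronglyMeasurable[mγ.comap V] g)
    (hV : (range V).Finite) : ∃ C, ∀ ω, ‖g ω‖ ≤ C := by
  obtain ⟨C, hC⟩ := ((hg.factorsThrough.finite_range hV).image norm).bddAbove
  exact ⟨C, fun ω => hC (mem_image_of_mem _ (mem_range_self ω))⟩

theorem exists_factorsThrough_mulVec_eq {ι κ R : Type*} [Fintype ι] [DecidableEq ι]
    [NonAssocSemiring R] {x : Ω → ι → R} (hx : ∀ ω, ∃ i, x ω = Pi.single i 1)
    {Y : Ω → κ → R} (hY : Y.FactorsThrough fun ω => (V ω, x ω)) :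
    ∃ Z : Ω → κ → ι → R, Z.FactorsThrough V ∧ ∀ ω, Y ω = Z ω *ᵥ x ω := by
  classical
  -- `Z ω k j` is the value of `Y` on a path with the history of `ω` and next step `j`.
  refine ⟨fun ω k j => if h : ∃ ω', V ω' = V ω ∧ x ω' = Pi.single j 1 then Y h.choose k else 0,
    fun ω₁ ω₂ h => by simp only [h], fun ω => ?_⟩
  obtain ⟨i, hi⟩ := hx ω
  have h : ∃ ω', V ω' = V ω ∧ x ω' = Pi.single i 1 := ⟨ω, rfl, hi⟩
  ext k
  rw [hi]
  change _ = _ ⬝ᵥ _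
  simp only [dotProduct_single, mul_one, dif_pos h]
  exact congrFun (hY (Prod.ext h.choose_spec.1.symm (hi.trans h.choose_spec.2.symm))) k

theorem exists_factorsThrough_forall_apply_eq {α : Type*} [Nonempty α] {Φ : Ω → α → β}
    (hΦ : ∀ a, (fun ω => Φ ω a).FactorsThrough V) {u : Ω → β} (hu : u.FactorsThrough V) :
    ∃ y : Ω → α, y.FactorsThrough V ∧ ∀ ω, (∃ a, Φ ω a = u ω) → Φ ω (y ω) = u ω := by
  refine ⟨fun ω => Classical.epsilon fun a => Φ ω a = u ω, fun ω₁ ω₂ h => ?_,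
    fun ω => Classical.epsilon_spec⟩
  dsimp only
  rw [show Φ ω₁ = Φ ω₂ from funext fun a => hΦ a h, hu h]

end FactorsThrough

namespace MeasureTheory

variable {Ω E F G : Type*} {m m0 : MeasurableSpace Ω} {μ : Measure Ω}
  [NormedAddCommGroup E] [NormedSpace ℝ E] [CompleteSpace E]
  [NormedAddCommGroup F] [NormedSpace ℝ F] [NormedAddCommGroup G] [NormedSpace ℝ G]
  [CompleteSpace G]

theorem condExp_sub_condExp_ae_eq_zero (hm : m ≤ m0) [SigmaFinite (μ.trim hm)] {f : Ω → E}
    (hf : Integrable f μ) : μ[f - μ[f|m] | m] =ᵐ[μ] 0 := by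
  refine (condExp_sub hf integrable_condExp m).trans ?_
  rw [condExp_of_stronglyMeasurable hm stronglyMeasurable_condExp integrable_condExp, sub_self]

theorem ae_eq_condExp_of_add_bilin (hm : m ≤ m0) [SigmaFinite (μ.trim hm)]
    (B : F →L[ℝ] E →L[ℝ] G) {A Y : Ω → G} {f : Ω → F} {g : Ω → E}
    (hA : StronglyMeasurable[m] A) (hAi : Integrable A μ) (hf : StronglyMeasurable[m] f)
    (hfg : Integrable (fun ω => B (f ω) (g ω)) μ) (hg : Integrable g μ) (hg0 : μ[g|m] =ᵐ[μ] 0)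
    (h : ∀ᵐ ω ∂μ, A ω + B (f ω) (g ω) = Y ω) : A =ᵐ[μ] μ[Y|m] := by
  have hBfg : μ[fun ω => B (f ω) (g ω) | m] =ᵐ[μ] 0 := by
    filter_upwards [condExp_bilin_of_stronglyMeasurable_left B hf hfg hg, hg0] with ω h₁ h₂
    simp [h₁, h₂]
  calc A = μ[A|m] := (condExp_of_stronglyMeasurable hm hA hAi).symm
    _ =ᵐ[μ] μ[A|m] + μ[fun ω => B (f ω) (g ω) | m] := by
      filter_upwards [hBfg] with ω hω
      simp [hω]
    _ =ᵐ[μ] μ[A + fun ω => B (f ω) (g ω) | m] := (condExp_add hAi hfg m).symm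
    _ =ᵐ[μ] μ[Y|m] := condExp_congr_ae h

theorem ae_eq_condExp_of_add_mulVec {ι κ : Type*} [Fintype ι] [Fintype κ] [IsFiniteMeasure μ]
    (hm : m ≤ m0) {A Y : Ω → κ → ℝ} {Z : Ω → κ → ι → ℝ} {g : Ω → ι → ℝ}
    (hA : StronglyMeasurable[m] A) (hA_bdd : ∃ C, ∀ ω, ‖A ω‖ ≤ C)
    (hZ : StronglyMeasurable[m] Z) (hZ_bdd : ∃ C, ∀ ω, ‖Z ω‖ ≤ C)
    (hg : Integrable g μ) (hg0 : μ[g|m] =ᵐ[μ] 0) (h : ∀ᵐ ω ∂μ, A ω + Z ω *ᵥ g ω = Y ω) :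
    A =ᵐ[μ] μ[Y|m] := by
  let B : (κ → ι → ℝ) →L[ℝ] (ι → ℝ) →L[ℝ] κ → ℝ :=
    LinearMap.toContinuousLinearMap
      (LinearMap.toContinuousLinearMap.toLinearMap ∘ₗ mulVecBilin ℝ ℝ)
  obtain ⟨CA, hCA⟩ := hA_bdd
  obtain ⟨CZ, hCZ⟩ := hZ_bdd
  exact ae_eq_condExp_of_add_bilin hm B hA
    (.of_bound (hA.mono hm).aestronglyMeasurable CA (ae_of_all _ hCA)) hZ
    (B.integrable_of_bilin_of_bdd_left CZ (hZ.mono hm).aestronglyMeasurable (ae_of_all _ hCZ) hg)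
    hg hg0 h

end MeasureTheory

theorem ae_eq_of_sub_add_mulVec_ae_eq {Ω γ ι κ : Type*} [Fintype ι] [Fintype κ]
    [mγ : MeasurableSpace γ] [MeasurableSingletonClass γ] {m0 : MeasurableSpace Ω} {μ : Measure Ω}
    [IsFiniteMeasure μ] {V : Ω → γ} (hV : (range V).Finite) (hle : mγ.comap V ≤ m0)
    {g : Ω → ι → ℝ} (hg : Integrable g μ) (hg0 : μ[g | mγ.comap V] =ᵐ[μ] 0)
    {f : Ω → (κ → ℝ) → (κ → ι → ℝ) → κ → ℝ}
    (hf_meas : ∀ (Y : Ω → κ → ℝ) (Z : Ω → κ → ι → ℝ), StronglyMeasurable[mγ.comap V] Y →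
      StronglyMeasurable[mγ.comap V] Z → StronglyMeasurable[mγ.comap V] fun ω => f ω (Y ω) (Z ω))
    (hf_inv : ∀ (Y : Ω → κ → ℝ) (Z Z' : Ω → κ → ι → ℝ), (∀ᵐ ω ∂μ, Z ω *ᵥ g ω = Z' ω *ᵥ g ω) →
      ∀ᵐ ω ∂μ, f ω (Y ω) (Z ω) = f ω (Y ω) (Z' ω))
    {Y Y' Ynext : Ω → κ → ℝ} {Z Z' : Ω → κ → ι → ℝ}
    (hY : StronglyMeasurable[mγ.comap V] Y) (hY' : StronglyMeasurable[mγ.comap V] Y')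
    (hZ : StronglyMeasurable[mγ.comap V] Z) (hZ' : StronglyMeasurable[mγ.comap V] Z')
    (hinj : ∀ᵐ ω ∂μ, Injective fun y => y - f ω y (Z ω))
    (h : ∀ᵐ ω ∂μ, Y ω - f ω (Y ω) (Z ω) + Z ω *ᵥ g ω = Ynext ω)
    (h' : ∀ᵐ ω ∂μ, Y' ω - f ω (Y' ω) (Z' ω) + Z' ω *ᵥ g ω = Ynext ω) :
    Y =ᵐ[μ] Y' ∧ ∀ᵐ ω ∂μ, Z ω *ᵥ g ω = Z' ω *ᵥ g ω := by
  have hcond : ∀ {Y Z}, StronglyMeasurable[mγ.comap V] Y → StronglyMeasurable[mγ.comap V] Z →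
      (∀ᵐ ω ∂μ, Y ω - f ω (Y ω) (Z ω) + Z ω *ᵥ g ω = Ynext ω) →
      (fun ω => Y ω - f ω (Y ω) (Z ω)) =ᵐ[μ] μ[Ynext | mγ.comap V] := fun hY hZ h =>
    have hA := hY.sub (hf_meas _ _ hY hZ)
    ae_eq_condExp_of_add_mulVec hle hA (hA.exists_norm_le_of_comap hV) hZ
      (hZ.exists_norm_le_of_comap hV) hg hg0 h
  have hA := (hcond hY hZ h).trans (hcond hY' hZ' h').symm
  have hZg : ∀ᵐ ω ∂μ, Z ω *ᵥ g ω = Z' ω *ᵥ g ω := by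
    filter_upwards [h, h', hA] with ω hω hω' hAω
    rw [← hω', hAω] at hω
    exact add_left_cancel hω
  refine ⟨?_, hZg⟩
  filter_upwards [hA, hf_inv Y' Z Z' hZg, hinj] with ω hAω hf hinjω
  exact hinjω (show Y ω - f ω (Y ω) (Z ω) = Y' ω - f ω (Y' ω) (Z ω) by rw [hAω, hf])

/-- one-step bijection.  Under the hypotheses of the existence theorem there
is, for each `t`, a bijection (up to a.s. equality and `∼_{M_{t+1}}`-equivalence) between
pairs `(Y_t, Z_t)` and terminal values `Y_{t+1}`, via
`Y_{t+1} = Y_t - F(ω,t,Y_t,Z_t) + Z_t M_{t+1}`. -/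
theorem one_step_bijection
    {Ω : Type*} {m0 : MeasurableSpace Ω} {μ : Measure Ω} [IsProbabilityMeasure μ]
    {N K : ℕ} (𝓕 : Filtration ℕ m0)
    (X : ℕ → Ω → (Fin N → ℝ))
    (hXval : ∀ t ω, ∃ i : Fin N, X t ω = fun j => if j = i then (1 : ℝ) else 0)
    (h𝓕 : ∀ t, (𝓕 t : MeasurableSpace Ω)
      = MeasurableSpace.comap (fun ω (s : Fin (t + 1)) => X (s : ℕ) ω) inferInstance)
    (hXint : ∀ t, Integrable (X t) μ)
    (M : ℕ → Ω → (Fin N → ℝ))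
    (hM : ∀ t, M t = X t - μ[X t | 𝓕 (t - 1)])
    (F : Ω → ℕ → (Fin K → ℝ) → (Fin K → Fin N → ℝ) → (Fin K → ℝ))
    (t : ℕ)
    (hFmeas : ∀ (Y : Ω → Fin K → ℝ) (Z : Ω → Fin K → Fin N → ℝ),
      StronglyMeasurable[𝓕 t] Y → StronglyMeasurable[𝓕 t] Z →
      StronglyMeasurable[𝓕 t] (fun ω => F ω t (Y ω) (Z ω)))
    (hFinv : ∀ (Y : Ω → Fin K → ℝ) (Z1 Z2 : Ω → Fin K → Fin N → ℝ),
      (∀ᵐ ω ∂μ, (fun i => ∑ j, Z1 ω i j * M (t + 1) ω j)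
          = (fun i => ∑ j, Z2 ω i j * M (t + 1) ω j)) →
      ∀ᵐ ω ∂μ, F ω t (Y ω) (Z1 ω) = F ω t (Y ω) (Z2 ω))
    (hFbij : ∀ Z : Ω → Fin K → Fin N → ℝ,
      ∀ᵐ ω ∂μ, Function.Bijective (fun y : Fin K → ℝ => y - F ω t y (Z ω))) :
    -- for every essentially bounded 𝓕 (t+1)-measurable terminal value there is a unique
    -- (up to a.s. equality and ∼_{M_{t+1}}) pair (Y_t, Z_t) generating it
    ∀ Ynext : Ω → Fin K → ℝ,
      StronglyMeasurable[𝓕 (t + 1)] Ynext → (∃ C, ∀ ω, ‖Ynext ω‖ ≤ C) →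
      ∃ (Yt : Ω → Fin K → ℝ) (Zt : Ω → Fin K → Fin N → ℝ),
        StronglyMeasurable[𝓕 t] Yt ∧ StronglyMeasurable[𝓕 t] Zt ∧
        (∀ᵐ ω ∂μ,
          Yt ω - F ω t (Yt ω) (Zt ω) + (fun i => ∑ j, Zt ω i j * M (t + 1) ω j) = Ynext ω) ∧
        ∀ (Yt' : Ω → Fin K → ℝ) (Zt' : Ω → Fin K → Fin N → ℝ),
          StronglyMeasurable[𝓕 t] Yt' → StronglyMeasurable[𝓕 t] Zt' →
          (∀ᵐ ω ∂μ,
            Yt' ω - F ω t (Yt' ω) (Zt' ω)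
              + (fun i => ∑ j, Zt' ω i j * M (t + 1) ω j) = Ynext ω) →
          (Yt =ᵐ[μ] Yt') ∧
          (∀ᵐ ω ∂μ, (fun i => ∑ j, Zt ω i j * M (t + 1) ω j)
              = (fun i => ∑ j, Zt' ω i j * M (t + 1) ω j)) := by
  intro Ynext hYnext _
  set V : Ω → Fin (t + 1) → Fin N → ℝ := fun ω s => X s ω
  have hX : ∀ s ω, ∃ i, X s ω = Pi.single i 1 := fun s ω =>
    (hXval s ω).imp fun i h => h.trans (funext fun j => (Pi.single_apply i 1 j).symm)
  have hV : (range V).Finite := finite_range_pi fun s =>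
    (finite_range fun i : Fin N => Pi.single i (1 : ℝ)).subset
      (range_subset_iff.2 fun ω => (hX s ω).imp fun _ h => h.symm)
  obtain ⟨Z, hZV, hYnextZ⟩ := exists_factorsThrough_mulVec_eq (V := V) (hX (t + 1))
    fun ω₁ ω₂ h => (h𝓕 (t + 1) ▸ hYnext).factorsThrough (factorsThrough_init_last X (t + 1) h)
  have hZ := hZV.stronglyMeasurable_comap hV
  have hMQ : M (t + 1) = X (t + 1) - μ[X (t + 1) | 𝓕 t] := by simpa using hM (t + 1)
  have hM0 : μ[M (t + 1) | 𝓕 t] =ᵐ[μ] 0 := by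
    rw [hMQ]; exact condExp_sub_condExp_ae_eq_zero _ (hXint _)
  have hMint : Integrable (M (t + 1)) μ := hMQ ▸ (hXint _).sub integrable_condExp
  have hle := 𝓕.le t
  have h𝓕t : (𝓕 t : MeasurableSpace Ω) = MeasurableSpace.comap V inferInstance := h𝓕 t
  rw [h𝓕t] at hFmeas hMQ hM0 hle ⊢
  set Q := μ[X (t + 1) | MeasurableSpace.comap V inferInstance]
  have hQV : Q.FactorsThrough V := stronglyMeasurable_condExp.factorsThrough
  have hFV : ∀ y, (fun ω => y - F ω t y (Z ω)).FactorsThrough V := fun y ω₁ ω₂ h =>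
    congrArg (y - ·) ((hFmeas _ Z stronglyMeasurable_const hZ).factorsThrough h)
  obtain ⟨Y, hYV, hYsol⟩ := exists_factorsThrough_forall_apply_eq hFV (u := fun ω => Z ω *ᵥ Q ω)
    fun ω₁ ω₂ h => by simp only [hZV h, hQV h]
  have hsol : ∀ᵐ ω ∂μ, Y ω - F ω t (Y ω) (Z ω) + Z ω *ᵥ M (t + 1) ω = Ynext ω := by
    filter_upwards [hFbij Z] with ω hω
    rw [hYsol ω (hω.2 _), hYnextZ ω, hMQ, Pi.sub_apply,
      ← mulVec_add (Z ω : Matrix (Fin K) (Fin N) ℝ), add_sub_cancel]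
  have hY := hYV.stronglyMeasurable_comap hV
  exact ⟨Y, Z, hY, hZ, hsol, fun Y' Z' hY' hZ' hsol' =>
    ae_eq_of_sub_add_mulVec_ae_eq hV hle hMint hM0 hFmeas hFinv hY hY' hZ hZ'
      ((hFbij Z).mono fun _ h => h.1) hsol hsol'⟩
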